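/- Let ρ̃ be a density matrix with trace distance at most ε from ρ = |0⟩⟨0|_A ⊗ (1/2^b) I_B, and partition the n = a+b qubits into C and D. For any unitary U, the probability that measuring register C of U ρ̃ U† in the computational basis leaves a post-measurement state on D within trace distance ε' of a fixed pure state is at most (2^{a−d} + 2ε)/(1 − 2ε'), assuming ε' < 1/2. -/

import Mathlib

open Matrix BigOperators Kronecker
open scoped Classical ComplexOrder

noncomputable section

def ptraceFst {C D : Type*} [Fintype C] (σ : Matrix (C × D) (C × D) ℂ) :
    Matrix D D ℂ := Matrix.of fun y y' => ∑ j : C, σ (j, y) (j, y')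

def ptraceSnd {C D : Type*} [Fintype D] (σ : Matrix (C × D) (C × D) ℂ) :
    Matrix C C ℂ := Matrix.of fun x x' => ∑ j : D, σ (x, j) (x', j)

def traceNorm {n : Type*} [Fintype n] [DecidableEq n] (M : Matrix n n ℂ) : ℝ :=
  ((Matrix.posSemidef_conjTranspose_mul_self M).1.eigenvectorUnitary.1 *
    Matrix.diagonal (((↑) : ℝ → ℂ) ∘ (Real.sqrt ·) ∘ (Matrix.posSemidef_conjTranspose_mul_self M).1.eigenvalues) *
    (star (Matrix.posSemidef_conjTranspose_mul_self M).1.eigenvectorUnitary : Matrix n n ℂ)).trace.re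

def traceDist {n : Type*} [Fintype n] [DecidableEq n] (σ σ' : Matrix n n ℂ) : ℝ :=
  traceNorm (σ - σ') / 2

def IsDensity {n : Type*} [Fintype n] (M : Matrix n n ℂ) : Prop :=
  M.PosSemidef ∧ M.trace = 1

def IsPure {n : Type*} [Fintype n] (σ : Matrix n n ℂ) : Prop :=
  ∃ ψ : n → ℂ, (∑ i, Complex.normSq (ψ i)) = 1 ∧ σ = Matrix.vecMulVec ψ (star ψ)

def inputState (a b : ℕ) :
    Matrix (Fin (2^a) × Fin (2^b)) (Fin (2^a) × Fin (2^b)) ℂ :=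
  (Matrix.single 0 0 1) ⊗ₖ (((2:ℂ)^b)⁻¹ • (1 : Matrix (Fin (2^b)) (Fin (2^b)) ℂ))

def measSub {C D : Type*} [Fintype C] [Fintype D] (σ : Matrix (C × D) (C × D) ℂ) (j : C) :
    Matrix D D ℂ := Matrix.of fun y y' => σ (j, y) (j, y')

def measProb {C D : Type*} [Fintype C] [Fintype D] (σ : Matrix (C × D) (C × D) ℂ) (j : C) : ℝ :=
  ((measSub σ j).trace).re

def gibbs {n : Type*} [Fintype n] [DecidableEq n] (β : ℝ) {H : Matrix n n ℂ}
    (hH : H.IsHermitian) : Matrix n n ℂ :=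
  ((hH.cfc (fun x => Real.exp (-β * x))).trace)⁻¹ • hH.cfc (fun x => Real.exp (-β * x))

def vNEntropy {n : Type*} [Fintype n] [DecidableEq n] (M : Matrix n n ℂ) : ℝ :=
  if h : M.IsHermitian then -∑ i, (h.eigenvalues i) * Real.logb 2 (h.eigenvalues i) else 0

def iterState (n : ℕ) (U : ℕ → Matrix (Fin 2 × Fin (2^n)) (Fin 2 × Fin (2^n)) ℂ) :
    ℕ → Matrix (Fin (2^n)) (Fin (2^n)) ℂ
  | 0 => ((2:ℂ)^n)⁻¹ • 1
  | k+1 => ptraceFst (U k * ((Matrix.single 0 0 1) ⊗ₖ iterState n U k) * (U k)ᴴ)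

/-!
Let `M = Σ_{j good} |j⟩⟨j| ⊗ |ψ⟩⟨ψ|`, a projection. If the normalised branch of a good outcome `j`
is `ε'`-close to `|ψ⟩⟨ψ|`, its overlap with `|ψ⟩⟨ψ|` is at least `1 - 2ε'`; summing over good `j`
gives `(1 - 2ε') Σ_{good} p_j ≤ tr (M U ρ̃ U†)`. Pulling `M` back through `U` and the relabelling
of qubits gives an operator `0 ≤ N ≤ 1` with `tr N = tr M = #good ≤ 2^c`, and
`tr (ρ̃ N) ≤ tr (ρ N) + ‖ρ̃ - ρ‖₁ ≤ 2^{-b} tr N + 2ε` because `ρ ≤ 2^{-b} · 1`.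

Both steps rest on `|tr (X N)| ≤ ‖X‖₁` for Hermitian `X` and `0 ≤ N ≤ 1`, which follows from
`X = X⁺ - X⁻` and `|X| = X⁺ + X⁻`.
-/

open scoped MatrixOrder

namespace Matrix

section StarProjection

variable {R : Type*} {l m : Type*} [Fintype m] [Fintype l]

lemma isStarProjection_diagonal [DecidableEq m] [Semiring R] [StarRing R] {d : m → R}
    (hd : ∀ i, IsStarProjection (d i)) : IsStarProjection (diagonal d) where
  isIdempotentElem := by
    rw [IsIdempotentElem, diagonal_mul_diagonal]
    exact congrArg diagonal (funext fun i => (hd i).isIdempotentElem)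
  isSelfAdjoint := by
    rw [IsSelfAdjoint, star_eq_conjTranspose, diagonal_conjTranspose]
    exact congrArg diagonal (funext fun i => (hd i).isSelfAdjoint)

lemma isStarProjection_single_one [DecidableEq m] [Semiring R] [StarRing R] (i : m) :
    IsStarProjection (single i i (1 : R)) where
  isIdempotentElem := by rw [IsIdempotentElem, single_mul_single_same, one_mul]
  isSelfAdjoint := by rw [IsSelfAdjoint, star_eq_conjTranspose, conjTranspose_single, star_one]

lemma IsStarProjection.kronecker [CommSemiring R] [StarRing R] {A : Matrix m m R}
    {B : Matrix l l R} (hA : IsStarProjection A) (hB : IsStarProjection B) :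
    IsStarProjection (A ⊗ₖ B) where
  isIdempotentElem := by
    rw [IsIdempotentElem, ← mul_kronecker_mul, hA.isIdempotentElem.eq, hB.isIdempotentElem.eq]
  isSelfAdjoint := by
    rw [IsSelfAdjoint, star_eq_conjTranspose, conjTranspose_kronecker,
      ← star_eq_conjTranspose, ← star_eq_conjTranspose, hA.isSelfAdjoint.star_eq,
      hB.isSelfAdjoint.star_eq]

lemma trace_vecMulVec_self_star {ψ : m → ℂ} (hψ : ∑ i, Complex.normSq (ψ i) = 1) :
    (vecMulVec ψ (star ψ)).trace = 1 := by
  simp only [trace_vecMulVec, dotProduct, Pi.star_apply, Complex.star_def, Complex.mul_conj]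
  exact_mod_cast hψ

lemma isStarProjection_vecMulVec_self_star {ψ : m → ℂ}
    (hψ : ∑ i, Complex.normSq (ψ i) = 1) :
    IsStarProjection (vecMulVec ψ (star ψ)) where
  isIdempotentElem := by
    rw [IsIdempotentElem, vecMulVec_mul_vecMulVec, dotProduct_comm, ← trace_vecMulVec,
      trace_vecMulVec_self_star hψ, one_smul]
  isSelfAdjoint := by
    rw [IsSelfAdjoint, star_eq_conjTranspose, conjTranspose_vecMulVec, star_star]

end StarProjection

section Trace

variable {m n : Type*} [Fintype m] [Fintype n]

lemma trace_submatrix_equiv (X : Matrix n n ℂ) (e : m ≃ n) :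
    (X.submatrix e e).trace = X.trace :=
  Fintype.sum_equiv e _ _ fun _ => rfl

lemma trace_conj_reindex_mul (e : m ≃ n) (U : Matrix n n ℂ) (X : Matrix m m ℂ)
    (M : Matrix n n ℂ) :
    (U * reindex e e X * Uᴴ * M).trace = (X * (Uᴴ * M * U).submatrix e e).trace := by
  obtain ⟨Y, rfl⟩ : ∃ Y, X = Y.submatrix e e := ⟨reindex e e X, by simp⟩
  rw [submatrix_mul_equiv, trace_submatrix_equiv, reindex_apply, submatrix_submatrix]
  simp only [Equiv.self_comp_symm, submatrix_id_id]
  rw [Matrix.mul_assoc, Matrix.mul_assoc, trace_mul_comm]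
  simp only [Matrix.mul_assoc]

variable [DecidableEq n]

lemma traceNorm_eq_re_trace_abs (X : Matrix n n ℂ) : traceNorm X = (CFC.abs X).trace.re := by
  rw [CFC.abs, CFC.sqrt_eq_real_sqrt _ (star_mul_self_nonneg X), cfcₙ_eq_cfc,
    star_eq_conjTranspose, (posSemidef_conjTranspose_mul_self X).1.cfc_eq]
  rfl

lemma re_trace_mul_nonneg {A B : Matrix n n ℂ} (hA : 0 ≤ A) (hB : 0 ≤ B) :
    0 ≤ (A * B).trace.re := by
  obtain ⟨C, rfl⟩ := CStarAlgebra.nonneg_iff_eq_star_mul_self.mp hA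
  rw [star_eq_conjTranspose, Matrix.mul_assoc, trace_mul_comm]
  exact (Complex.nonneg_iff.mp (hB.posSemidef.mul_mul_conjTranspose_same C).trace_nonneg).1

lemma re_trace_mul_le_re_trace {A M : Matrix n n ℂ} (hA : 0 ≤ A) (hM₁ : M ≤ 1) :
    (A * M).trace.re ≤ A.trace.re := by
  have := re_trace_mul_nonneg hA (sub_nonneg.mpr hM₁)
  rwa [Matrix.mul_sub, Matrix.mul_one, trace_sub, Complex.sub_re, sub_nonneg] at this

lemma IsHermitian.abs_re_trace_mul_le_traceNorm {X M : Matrix n n ℂ} (hX : X.IsHermitian)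
    (hM₀ : 0 ≤ M) (hM₁ : M ≤ 1) : |(X * M).trace.re| ≤ traceNorm X := by
  have hX' : IsSelfAdjoint X := hX
  have hsplit : (X * M).trace.re = (X⁺ * M).trace.re - (X⁻ * M).trace.re := by
    rw [← Complex.sub_re, ← trace_sub, ← Matrix.sub_mul, CFC.posPart_sub_negPart X]
  have hnorm : traceNorm X = X⁺.trace.re + X⁻.trace.re := by
    rw [traceNorm_eq_re_trace_abs, ← CFC.posPart_add_negPart X, trace_add, Complex.add_re]
  have := re_trace_mul_nonneg (CFC.posPart_nonneg X) hM₀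
  have := re_trace_mul_nonneg (CFC.negPart_nonneg X) hM₀
  have := re_trace_mul_le_re_trace (CFC.posPart_nonneg X) hM₁
  have := re_trace_mul_le_re_trace (CFC.negPart_nonneg X) hM₁
  rw [hsplit, hnorm, abs_le]
  constructor <;> linarith

lemma one_sub_two_mul_traceDist_le_re_trace_mul {ρ P : Matrix n n ℂ} (hρ : ρ.IsHermitian)
    (hP : IsStarProjection P) (hP₁ : P.trace = 1) :
    1 - 2 * traceDist ρ P ≤ (ρ * P).trace.re := by
  have hX : (ρ - P).IsHermitian := hρ.sub hP.isSelfAdjoint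
  have h := (abs_le.mp (hX.abs_re_trace_mul_le_traceNorm hP.nonneg hP.le_one)).1
  rw [Matrix.sub_mul, hP.isIdempotentElem.eq, trace_sub, hP₁, Complex.sub_re, Complex.one_re] at h
  rw [traceDist]
  linarith

lemma re_trace_mul_one_sub_two_mul_le_re_trace_mul {A P : Matrix n n ℂ} (hA : 0 ≤ A)
    (hP : IsStarProjection P) (hP₁ : P.trace = 1) {ε : ℝ}
    (hε : traceDist ((A.trace.re : ℂ)⁻¹ • A) P ≤ ε) :
    A.trace.re * (1 - 2 * ε) ≤ (A * P).trace.re := by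
  set p := A.trace.re
  obtain hp | hp : p = 0 ∨ 0 < p :=
    (Complex.nonneg_iff.mp hA.posSemidef.trace_nonneg).1.eq_or_lt'
  · rw [hp, zero_mul]
    exact re_trace_mul_nonneg hA hP.nonneg
  · have hρ : ((p : ℂ)⁻¹ • A).IsHermitian :=
      hA.posSemidef.isHermitian.smul (by rw [← Complex.ofReal_inv]; exact Complex.conj_ofReal _)
    have hρP : (((p : ℂ)⁻¹ • A) * P).trace.re = p⁻¹ * (A * P).trace.re := by
      rw [Matrix.smul_mul, trace_smul, smul_eq_mul, ← Complex.ofReal_inv, Complex.re_ofReal_mul]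
    have h := one_sub_two_mul_traceDist_le_re_trace_mul hρ hP hP₁
    calc p * (1 - 2 * ε) ≤ p * (1 - 2 * traceDist ((p : ℂ)⁻¹ • A) P) := by gcongr
      _ ≤ p * (p⁻¹ * (A * P).trace.re) := by rw [← hρP]; gcongr
      _ = (A * P).trace.re := by field_simp

lemma re_trace_mul_le_of_le_smul_one {ρ σ N : Matrix n n ℂ} (hρ : ρ.IsHermitian)
    {κ : ℝ} (hσ : σ ≤ (κ : ℂ) • 1) (hN₀ : 0 ≤ N) (hN₁ : N ≤ 1) :
    (ρ * N).trace.re ≤ κ * N.trace.re + traceNorm (ρ - σ) := by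
  have hρσ : (ρ - σ).IsHermitian :=
    hρ.sub <| IsSelfAdjoint.of_le hσ <|
      IsSelfAdjoint.smul (Complex.conj_ofReal κ) (IsSelfAdjoint.one _)
  have hclose := (abs_le.mp (hρσ.abs_re_trace_mul_le_traceNorm hN₀ hN₁)).2
  have hideal := re_trace_mul_nonneg (sub_nonneg.mpr hσ) hN₀
  rw [Matrix.sub_mul, trace_sub, Complex.sub_re] at hclose hideal
  rw [Matrix.smul_mul, Matrix.one_mul, trace_smul, smul_eq_mul, Complex.re_ofReal_mul] at hideal
  linarith

variable [DecidableEq m]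

lemma re_trace_conj_reindex_mul_le (e : m ≃ n) {U : Matrix n n ℂ}
    (hU : U ∈ unitaryGroup n ℂ) {ρ σ : Matrix m m ℂ} (hρ : ρ.IsHermitian) {κ : ℝ}
    (hσ : σ ≤ (κ : ℂ) • 1) {M : Matrix n n ℂ} (hM₀ : 0 ≤ M) (hM₁ : M ≤ 1) :
    (U * reindex e e ρ * Uᴴ * M).trace.re ≤ κ * M.trace.re + traceNorm (ρ - σ) := by
  have hUU : Uᴴ * U = 1 := mem_unitaryGroup_iff'.mp hU
  set N := (Uᴴ * M * U).submatrix e e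
  have hN₀ : 0 ≤ N := ((hM₀.posSemidef.conjTranspose_mul_mul_same U).submatrix e).nonneg
  have hN₁ : N ≤ 1 := by
    have h1N : 1 - N = (Uᴴ * (1 - M) * U).submatrix e e := by
      rw [Matrix.mul_sub, Matrix.sub_mul, Matrix.mul_one, hUU]
      exact congrArg (· - N) (submatrix_one_equiv e).symm
    rw [← sub_nonneg, h1N]
    exact (((sub_nonneg.mpr hM₁).posSemidef.conjTranspose_mul_mul_same U).submatrix e).nonneg
  have hNM : N.trace = M.trace := by
    rw [trace_submatrix_equiv, trace_mul_comm, ← Matrix.mul_assoc, mul_eq_one_comm.mp hUU,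
      Matrix.one_mul]
  rw [trace_conj_reindex_mul, ← hNM]
  exact re_trace_mul_le_of_le_smul_one hρ hσ hN₀ hN₁

end Trace

end Matrix

open Matrix

section Measurement

variable {C D : Type*} [Fintype C] [Fintype D]

lemma measSub_nonneg {σ : Matrix (C × D) (C × D) ℂ} (hσ : 0 ≤ σ) (j : C) :
    0 ≤ measSub σ j :=
  (hσ.posSemidef.submatrix (Prod.mk j)).nonneg

lemma trace_mul_diagonal_kronecker [DecidableEq C] (σ : Matrix (C × D) (C × D) ℂ)
    (g : C → ℂ) (P : Matrix D D ℂ) :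
    (σ * (diagonal g ⊗ₖ P)).trace = ∑ j, g j * (measSub σ j * P).trace := by
  simp only [trace, diag, mul_apply, Fintype.sum_prod_type, kronecker_apply, diagonal_apply,
    measSub, of_apply, Finset.mul_sum]
  refine Fintype.sum_congr _ _ fun x => Fintype.sum_congr _ _ fun y => ?_
  rw [Finset.sum_comm]
  refine Fintype.sum_congr _ _ fun z => ?_
  simp only [ite_mul, zero_mul, mul_ite, mul_zero, Finset.sum_ite_eq', Finset.mem_univ, if_true,
    mul_left_comm (g _)]

lemma sum_measProb_mul_one_sub_two_mul_le [DecidableEq C] [DecidableEq D]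
    {σ : Matrix (C × D) (C × D) ℂ} (hσ : 0 ≤ σ) {P : Matrix D D ℂ}
    (hP : IsStarProjection P) (hP₁ : P.trace = 1) {ε : ℝ} (G : Finset C)
    (hG : ∀ j ∈ G, traceDist (((measProb σ j : ℂ))⁻¹ • measSub σ j) P ≤ ε) :
    (∑ j ∈ G, measProb σ j) * (1 - 2 * ε)
      ≤ (σ * (diagonal (fun j => if j ∈ G then 1 else 0) ⊗ₖ P)).trace.re := by
  rw [trace_mul_diagonal_kronecker, Complex.re_sum, Finset.sum_mul]
  simp only [ite_mul, one_mul, zero_mul, apply_ite Complex.re, Complex.zero_re]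
  rw [← Finset.sum_filter, Finset.filter_mem_eq_inter, Finset.univ_inter]
  exact Finset.sum_le_sum fun j hj =>
    re_trace_mul_one_sub_two_mul_le_re_trace_mul (measSub_nonneg hσ j) hP hP₁ (hG j hj)

lemma isStarProjection_diagonal_ite_kronecker [DecidableEq C] (G : Finset C) {P : Matrix D D ℂ}
    (hP : IsStarProjection P) :
    IsStarProjection (diagonal (fun j => if j ∈ G then (1 : ℂ) else 0) ⊗ₖ P) :=
  (isStarProjection_diagonal fun j => by split_ifs <;> simp).kronecker hP

lemma trace_diagonal_ite_kronecker [DecidableEq C] (G : Finset C) {P : Matrix D D ℂ}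
    (hP₁ : P.trace = 1) :
    (diagonal (fun j => if j ∈ G then (1 : ℂ) else 0) ⊗ₖ P).trace = G.card := by
  rw [trace_kronecker, hP₁, mul_one, trace_diagonal, Finset.sum_boole, Finset.filter_mem_eq_inter,
    Finset.univ_inter]

end Measurement

lemma inputState_le_smul_one (a b : ℕ) :
    inputState a b ≤ (((2 ^ b : ℝ)⁻¹ : ℝ) : ℂ) • 1 := by
  have hκ : (((2 ^ b : ℝ)⁻¹ : ℝ) : ℂ) = ((2 : ℂ) ^ b)⁻¹ := by push_cast; rfl
  rw [hκ, Matrix.le_iff]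
  have h : ((2 : ℂ) ^ b)⁻¹ • (1 : Matrix (Fin (2 ^ a) × Fin (2 ^ b)) _ ℂ) - inputState a b
      = (1 - single 0 0 1) ⊗ₖ (((2 : ℂ) ^ b)⁻¹ • (1 : Matrix (Fin (2 ^ b)) _ ℂ)) := by
    rw [sub_eq_iff_eq_add, inputState, ← add_kronecker, sub_add_cancel, kronecker_smul,
      one_kronecker_one]
  rw [h]
  exact (isStarProjection_single_one 0).one_sub_nonneg.posSemidef.kronecker
    (PosSemidef.one.smul (by positivity))

theorem stmt8 (a b c d : ℕ) (hn : a + b = c + d) (ε ε' : ℝ) (hε' : ε' < 1/2)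
    (ρt : Matrix (Fin (2^a) × Fin (2^b)) (Fin (2^a) × Fin (2^b)) ℂ)
    (hρt : IsDensity ρt) (hclose : traceDist ρt (inputState a b) ≤ ε)
    (e : (Fin (2^a) × Fin (2^b)) ≃ (Fin (2^c) × Fin (2^d)))
    (U : Matrix (Fin (2^c) × Fin (2^d)) (Fin (2^c) × Fin (2^d)) ℂ)
    (hU : U ∈ Matrix.unitaryGroup (Fin (2^c) × Fin (2^d)) ℂ)
    (ψ : Fin (2^d) → ℂ) (hψ : (∑ i, Complex.normSq (ψ i)) = 1) :
    (∑ j : Fin (2^c),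
        if traceDist (((measProb (U * (Matrix.reindex e e ρt) * Uᴴ) j : ℂ))⁻¹
              • measSub (U * (Matrix.reindex e e ρt) * Uᴴ) j)
            (Matrix.vecMulVec ψ (star ψ)) ≤ ε'
          then measProb (U * (Matrix.reindex e e ρt) * Uᴴ) j else 0)
      ≤ ((2:ℝ)^((a:ℤ) - d) + 2 * ε) / (1 - 2 * ε') := by
  set σ := U * reindex e e ρt * Uᴴ
  set P := vecMulVec ψ (star ψ)
  set G := Finset.univ.filter fun j =>
    traceDist (((measProb σ j : ℂ))⁻¹ • measSub σ j) P ≤ ε'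
  set M := diagonal (fun j => if j ∈ G then (1 : ℂ) else 0) ⊗ₖ P
  have hP := isStarProjection_vecMulVec_self_star hψ
  have hP₁ := trace_vecMulVec_self_star hψ
  have hM := isStarProjection_diagonal_ite_kronecker G hP
  have hσ : 0 ≤ σ := ((hρt.1.submatrix e.symm).mul_mul_conjTranspose_same U).nonneg
  have hgood := sum_measProb_mul_one_sub_two_mul_le hσ hP hP₁ G
    fun j hj => (Finset.mem_filter.mp hj).2
  have hideal := re_trace_conj_reindex_mul_le e hU hρt.1.isHermitian (inputState_le_smul_one a b)
    hM.nonneg hM.le_one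
  have hG_card : (G.card : ℝ) ≤ 2 ^ c := by
    exact_mod_cast (Finset.card_le_univ G).trans_eq (by simp)
  have hpow : ((2 : ℝ) ^ b)⁻¹ * 2 ^ c = 2 ^ ((a : ℤ) - d) := by
    rw [show (a : ℤ) - d = c - b by omega, zpow_sub₀ two_ne_zero]
    simp [mul_comm, div_eq_mul_inv]
  have hdist : traceNorm (ρt - inputState a b) ≤ 2 * ε := by
    rw [traceDist] at hclose
    linarith
  rw [← Finset.sum_filter, le_div_iff₀ (by linarith)]
  calc (∑ j ∈ G, measProb σ j) * (1 - 2 * ε') ≤ (σ * M).trace.re := hgood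
    _ ≤ ((2 : ℝ) ^ b)⁻¹ * M.trace.re + traceNorm (ρt - inputState a b) := hideal
    _ ≤ ((2 : ℝ) ^ b)⁻¹ * 2 ^ c + 2 * ε := by
      rw [trace_diagonal_ite_kronecker G hP₁, Complex.natCast_re]
      gcongr
    _ = _ := by rw [hpow]

end
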